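/- arXiv:quant-ph/0404097 — 2 statements merged into one kernel-verified Lean document; each statement's English description precedes it below -/
import Mathlib

section
/- Every vertex of the bipartite no-signalling polytope with two d-valued inputs per party, all of whose single-party marginals are nonzero (a full-output vertex), is equivalent under local relabellings of inputs and outputs to the box p(ab|XY) = 1/k if (b − a) mod k = X·Y with a,b ∈ {0,…,k−1}, and 0 otherwise, for some k with 2 ≤ k ≤ d, together with the local deterministic boxes. -/
/-- The no-signalling polytope for two inputs per party, `d` outputs each. -/
def NSPolytope (d : ℕ) : Set (Fin 2 → Fin 2 → Fin d → Fin d → ℝ) :=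
  {p | (∀ X Y a b, 0 ≤ p X Y a b) ∧
       (∀ X Y, ∑ a, ∑ b, p X Y a b = 1) ∧
       (∀ X a, ∀ Y Y' : Fin 2, ∑ b, p X Y a b = ∑ b, p X Y' a b) ∧
       (∀ Y b, ∀ X X' : Fin 2, ∑ a, p X Y a b = ∑ a, p X' Y a b)}

/-- The `k`-box, viewed inside the `d`-output polytope (`k ≤ d`):
`p(ab|XY) = 1/k` if `a,b < k` and `(b − a) mod k = X·Y`, else `0`. -/
noncomputable def kBox (d k : ℕ) : Fin 2 → Fin 2 → Fin d → Fin d → ℝ :=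
  fun X Y a b =>
    if a.val < k ∧ b.val < k ∧ (b.val + (k - a.val)) % k = X.val * Y.val
    then 1 / (k : ℝ) else 0

/-!
A vertex `p` of the no-signalling polytope admits no nonzero perturbation that is supported on
the support of `p` and lies in the kernel of the linear no-signalling constraints; as these
constraints have rank at most `4d`, the support of `p` has at most `4d` elements. Full outputs put
a nonzero entry in each of the `4d` rows and in every column, so each block `p X Y` is a weighted
permutation matrix of some `π X Y`, with Alice's weights independent of `Y`. Bob's no-signalling
conditions make those weights invariant under the holonomy `π₀₁⁻¹ π₁₁ π₁₀⁻¹ π₀₀`, and the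
perturbation argument shows that every holonomy-invariant function with zero sum vanishes. Hence
the weights are all `1/d` and the holonomy is a single `d`-cycle, conjugate to `finRotate d`;
relabelling outputs turns `p` into the `d`-box (for `d = 1`, into a deterministic box).
-/

open Finset Filter Topology Module

theorem eq_zero_of_add_mem_of_sub_mem_of_mem_extremePoints {𝕜 E : Type*} [Field 𝕜]
    [LinearOrder 𝕜] [IsStrictOrderedRing 𝕜] [AddCommGroup E] [Module 𝕜 E]
    {A : Set E} {x v : E} (hx : x ∈ A.extremePoints 𝕜) (hadd : x + v ∈ A) (hsub : x - v ∈ A) :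
    v = 0 := by
  have hseg : x ∈ openSegment 𝕜 (x + v) (x - v) :=
    ⟨1 / 2, 1 / 2, by norm_num, by norm_num, by norm_num, by module⟩
  simpa using hx.2 hadd hsub hseg

theorem exists_pos_mul_abs_le {ι : Type*} [Finite ι] {p q : ι → ℝ} (hp : ∀ i, 0 ≤ p i)
    (hq : ∀ i, p i = 0 → q i = 0) : ∃ ε > 0, ∀ i, ε * |q i| ≤ p i := by
  have h : ∀ i, ∀ᶠ ε in 𝓝[>] (0 : ℝ), ε * |q i| ≤ p i := by
    intro i
    rcases (hp i).eq_or_lt with h0 | hpos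
    · simp [hq i h0.symm, ← h0]
    · have hlim : Tendsto (fun ε : ℝ => ε * |q i|) (𝓝[>] 0) (𝓝 0) :=
        ((continuous_id.mul continuous_const).tendsto' 0 0 (by simp)).mono_left
          nhdsWithin_le_nhds
      exact (hlim.eventually (gt_mem_nhds hpos)).mono fun _ => le_of_lt
  obtain ⟨ε, hε, hpos⟩ := ((eventually_all.2 h).and self_mem_nhdsWithin).exists
  exact ⟨ε, hpos, hε⟩

theorem exists_ne_zero_map_eq_zero_of_finrank_range_lt {K ι V : Type*} [Field K] [Fintype ι]
    [AddCommGroup V] [Module K V] (f : (ι → K) →ₗ[K] V) (s : Finset ι)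
    (h : finrank K (LinearMap.range f) < #s) : ∃ v ≠ 0, f v = 0 ∧ ∀ i ∉ s, v i = 0 := by
  set e := Function.ExtendByZero.linearMap K ((↑) : s → ι)
  have hlt : finrank K (LinearMap.range (f ∘ₗ e)) < finrank K (s → K) := by
    rw [finrank_fintype_fun_eq_card, Fintype.card_coe]
    exact (Submodule.finrank_mono (LinearMap.range_comp_le_range e f)).trans_lt h
  have hker : LinearMap.ker (f ∘ₗ e) ≠ ⊥ := by
    rw [← LinearMap.ker_rangeRestrict]
    exact LinearMap.ker_ne_bot_of_finrank_lt hlt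
  obtain ⟨w, hw, hw0⟩ := (Submodule.ne_bot_iff _).1 hker
  refine ⟨e w, fun h0 => hw0 (funext fun j => ?_), hw, fun i hi => ?_⟩
  · simpa [e, Subtype.val_injective.extend_apply] using congrFun h0 j
  · exact Function.extend_apply' _ _ _ (by rintro ⟨j, rfl⟩; exact hi j.2)

namespace NoSignalling

abbrev Box (d : ℕ) := Fin 2 → Fin 2 → Fin d → Fin d → ℝ

variable {d : ℕ}

def constraintMap (d : ℕ) :
    Box d →ₗ[ℝ] (Fin 2 → Fin d → ℝ) × (Fin 2 → Fin d → ℝ) × ℝ where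
  toFun q := (fun X a => ∑ b, q X 0 a b - ∑ b, q X 1 a b,
              fun Y b => ∑ a, q 0 Y a b - ∑ a, q 1 Y a b,
              ∑ a, ∑ b, q 0 0 a b)
  map_add' q r := by ext <;> simp [sum_add_distrib] <;> ring
  map_smul' c q := by ext <;> simp [mul_sub, mul_sum]

theorem mem_NSPolytope_iff {p : Box d} :
    p ∈ NSPolytope d ↔ (∀ X Y a b, 0 ≤ p X Y a b) ∧ constraintMap d p = (0, 0, 1) := by
  simp only [constraintMap, LinearMap.coe_mk, AddHom.coe_mk, Prod.mk.injEq, funext_iff,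
    Pi.zero_apply, sub_eq_zero]
  constructor
  · rintro ⟨hpos, hnorm, hA, hB⟩
    exact ⟨hpos, fun X a => hA X a 0 1, fun Y b => hB Y b 0 1, hnorm 0 0⟩
  · rintro ⟨hpos, hA, hB, h00⟩
    have hA' : ∀ X a Y, ∑ b, p X Y a b = ∑ b, p X 0 a b := by
      intro X a Y; fin_cases Y
      exacts [rfl, (hA X a).symm]
    have hB' : ∀ Y b X, ∑ a, p X Y a b = ∑ a, p 0 Y a b := by
      intro Y b X; fin_cases X
      exacts [rfl, (hB Y b).symm]
    refine ⟨hpos, fun X Y => ?_, fun X a Y Y' => by rw [hA' X a Y, hA' X a Y'],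
      fun Y b X X' => by rw [hB' Y b X, hB' Y b X']⟩
    calc ∑ a, ∑ b, p X Y a b = ∑ a, ∑ b, p X 0 a b := sum_congr rfl fun a _ => hA' X a Y
      _ = ∑ b, ∑ a, p X 0 a b := sum_comm
      _ = ∑ b, ∑ a, p 0 0 a b := sum_congr rfl fun b _ => hB' 0 b X
      _ = 1 := by rw [sum_comm, h00]

theorem eq_zero_of_supported_of_mem_extremePoints {p q : Box d}
    (hp : p ∈ (NSPolytope d).extremePoints ℝ) (hq : constraintMap d q = 0)
    (hsupp : ∀ X Y a b, p X Y a b = 0 → q X Y a b = 0) : q = 0 := by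
  obtain ⟨hpos, hp1⟩ := mem_NSPolytope_iff.1 hp.1
  obtain ⟨ε, hε, hεq⟩ := exists_pos_mul_abs_le
    (p := fun i : Fin 2 × Fin 2 × Fin d × Fin d => p i.1 i.2.1 i.2.2.1 i.2.2.2)
    (q := fun i => q i.1 i.2.1 i.2.2.1 i.2.2.2) (fun i => hpos _ _ _ _) (fun i => hsupp _ _ _ _)
  have hmem : ∀ s : ℝ, |s| = ε → p + s • q ∈ NSPolytope d := by
    refine fun s hs => mem_NSPolytope_iff.2 ⟨fun X Y a b => ?_, by simp [hq, hp1]⟩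
    have h := hεq (X, Y, a, b)
    have habs : |s * q X Y a b| = ε * |q X Y a b| := by rw [abs_mul, hs]
    simp only [Pi.add_apply, Pi.smul_apply, smul_eq_mul]
    linarith [neg_abs_le (s * q X Y a b)]
  have hεq0 : ε • q = 0 := eq_zero_of_add_mem_of_sub_mem_of_mem_extremePoints hp
    (hmem ε (abs_of_pos hε)) (by simpa [sub_eq_add_neg] using hmem (-ε) (by simp [hε.le]))
  exact (smul_eq_zero.1 hεq0).resolve_left hε.ne'

theorem finrank_range_constraintMap_le [NeZero d] :
    finrank ℝ (LinearMap.range (constraintMap d)) ≤ 4 * d := by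
  have hcod :
      finrank ℝ ((Fin 2 → Fin d → ℝ) × (Fin 2 → Fin d → ℝ) × ℝ) = 4 * d + 1 := by
    simp [finrank_prod, finrank_pi_fintype]; ring
  suffices LinearMap.range (constraintMap d) ≠ ⊤ by
    have := Submodule.finrank_lt this
    omega
  intro htop
  obtain ⟨q, hq⟩ := LinearMap.range_eq_top.1 htop (fun X _ => if X = 0 then 1 else 0, 0, 0)
  -- both sides equal the alternating sum of the four normalisations of `q`
  have hdouble : ∑ a, (constraintMap d q).1 0 a - ∑ a, (constraintMap d q).1 1 a =
      ∑ b, (constraintMap d q).2.1 0 b - ∑ b, (constraintMap d q).2.1 1 b := by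
    simp only [constraintMap, LinearMap.coe_mk, AddHom.coe_mk, sum_sub_distrib]
    rw [sum_comm (f := fun a b => q 0 0 a b), sum_comm (f := fun a b => q 0 1 a b),
      sum_comm (f := fun a b => q 1 0 a b), sum_comm (f := fun a b => q 1 1 a b)]
    ring
  simp [hq, NeZero.ne] at hdouble

def ofFlat (d : ℕ) : (Fin 2 × Fin 2 × Fin d × Fin d → ℝ) →ₗ[ℝ] Box d where
  toFun v X Y a b := v (X, Y, a, b)
  map_add' _ _ := rfl
  map_smul' _ _ := rfl

theorem sum_card_support_le_of_mem_extremePoints {p : Box d}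
    (hp : p ∈ (NSPolytope d).extremePoints ℝ) :
    ∑ X, ∑ Y, #{x : Fin d × Fin d | p X Y x.1 x.2 ≠ 0} ≤ 4 * d := by
  rcases eq_zero_or_neZero d with rfl | _
  · simp
  set s : Finset (Fin 2 × Fin 2 × Fin d × Fin d) := {i | p i.1 i.2.1 i.2.2.1 i.2.2.2 ≠ 0}
  have hs : #s = ∑ X, ∑ Y, #{x : Fin d × Fin d | p X Y x.1 x.2 ≠ 0} := by
    simp [s, card_filter, Fintype.sum_prod_type]
  rw [← hs]
  by_contra! hlt
  obtain ⟨v, hv0, hv, hvs⟩ := exists_ne_zero_map_eq_zero_of_finrank_range_lt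
    (constraintMap d ∘ₗ ofFlat d) s
    ((Submodule.finrank_mono (LinearMap.range_comp_le_range _ _)).trans_lt
      (finrank_range_constraintMap_le.trans_lt hlt))
  have hq := eq_zero_of_supported_of_mem_extremePoints hp hv fun X Y a b h0 =>
    hvs (X, Y, a, b) (by simp [s, h0])
  exact hv0 (funext fun i => congr($hq i.1 i.2.1 i.2.2.1 i.2.2.2))

end NoSignalling

section WeightedPermutation

variable {α β R : Type*} [Fintype α] [Fintype β] [Zero R] [DecidableEq R]

theorem card_support_eq_sum_card_row (M : α → β → R) :
    #{x : α × β | M x.1 x.2 ≠ 0} = ∑ a, #{b | M a b ≠ 0} := by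
  simp [card_filter, Fintype.sum_prod_type]

theorem card_le_card_support (M : α → β → R) (hrow : ∀ a, ∃ b, M a b ≠ 0) :
    Fintype.card α ≤ #{x : α × β | M x.1 x.2 ≠ 0} := by
  rw [card_support_eq_sum_card_row, Fintype.card_eq_sum_ones]
  exact sum_le_sum fun a _ => card_pos.2 (by simpa [filter_nonempty_iff] using hrow a)

theorem exists_perm_ne_zero_iff_of_card_support_le (M : α → α → R)
    (hrow : ∀ a, ∃ b, M a b ≠ 0) (hcol : ∀ b, ∃ a, M a b ≠ 0)
    (hcard : #{x : α × α | M x.1 x.2 ≠ 0} ≤ Fintype.card α) :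
    ∃ π : Equiv.Perm α, ∀ a b, M a b ≠ 0 ↔ b = π a := by
  have hone : ∀ a, #{b | M a b ≠ 0} = 1 := by
    have hle : ∀ a ∈ univ, 1 ≤ #{b | M a b ≠ 0} := fun a _ =>
      card_pos.2 (by simpa [filter_nonempty_iff] using hrow a)
    have hsum : ∑ _a : α, 1 = ∑ a, #{b | M a b ≠ 0} := by
      rw [← card_support_eq_sum_card_row, ← Fintype.card_eq_sum_ones]
      exact le_antisymm (card_le_card_support M hrow) hcard
    exact fun a => ((sum_eq_sum_iff_of_le hle).1 hsum a (mem_univ a)).symm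
  choose μ hμ using fun a => card_eq_one.1 (hone a)
  have hμ' : ∀ a b, M a b ≠ 0 ↔ b = μ a := fun a b => by
    simpa using Finset.ext_iff.1 (hμ a) b
  have hsurj : Function.Surjective μ := fun b =>
    let ⟨a, ha⟩ := hcol b
    ⟨a, ((hμ' a b).1 ha).symm⟩
  exact ⟨Equiv.ofBijective μ ⟨Finite.injective_iff_surjective.2 hsurj, hsurj⟩, hμ'⟩

end WeightedPermutation

section Permutations

open Equiv

variable {α : Type*}

def bobShift (π : Fin 2 → Fin 2 → Perm α) (Y : Fin 2) : Perm α := (π 0 Y)⁻¹ * π 1 Y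

def holonomy (π : Fin 2 → Fin 2 → Perm α) : Perm α := bobShift π 1 * (bobShift π 0)⁻¹

theorem apply_relabel_eq (π : Fin 2 → Fin 2 → Perm α) {θ ρ : Perm α}
    (h : holonomy π * θ = θ * ρ) (X Y : Fin 2) (a : α) :
    π X Y (![θ, (bobShift π 0)⁻¹ * θ] X a) =
      ![π 0 0 * θ, π 0 1 * θ] Y ((ρ ^ (X.val * Y.val)) a) := by
  fin_cases X <;> fin_cases Y <;> simp [bobShift]
  simpa [holonomy, bobShift] using congr(π 0 1 ($h a))

theorem isConj_finRotate_of_forall_invariant {d : ℕ} (hd : 2 ≤ d) (σ : Perm (Fin d))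
    (h : ∀ f : Fin d → ℝ, (∀ a, f (σ a) = f a) → ∑ a, f a = 0 → f = 0) :
    IsConj σ (finRotate d) := by
  have hsame : ∀ x y, σ.SameCycle x y := by
    intro x y
    by_contra hxy
    set O : Finset (Fin d) := {z | σ.SameCycle x z}
    set c : ℝ := #O / d
    have hf := h (fun z => (if z ∈ O then 1 else 0) - c)
      (fun z => by simp [O, Perm.sameCycle_apply_right])
      (by simp [sum_sub_distrib, c]; field_simp; ring)
    have hx := congrFun hf x
    have hy := congrFun hf y
    simp [O, hxy, Perm.SameCycle.refl] at hx hy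
    linarith
  have hmoved : ∀ x, σ x ≠ x := fun x hx => by
    obtain ⟨y, hy⟩ := Fintype.exists_ne_of_one_lt_card (by simp; omega) x
    exact hy ((hsame x y).eq_of_left hx).symm
  have hsupp : σ.support = univ := by ext x; simp [hmoved x]
  refine Perm.IsCycle.isConj ⟨⟨0, by omega⟩, hmoved _, fun y _ => hsame _ y⟩
    (isCycle_finRotate_of_le hd) ?_
  rw [hsupp, support_finRotate_of_le hd]

open Fin.NatCast in
theorem finRotate_pow_apply {d : ℕ} [NeZero d] (k : ℕ) (a : Fin d) :
    (finRotate d ^ k) a = a + (k : Fin d) := by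
  induction k with
  | zero => simp
  | succ k ih => rw [pow_succ', Perm.mul_apply, ih, finRotate_apply, Nat.cast_succ, add_assoc]

theorem kBox_self_apply {d : ℕ} (hd : 2 ≤ d) (X Y : Fin 2) (a b : Fin d) :
    kBox d d X Y a b = if b = (finRotate d ^ (X.val * Y.val)) a then 1 / (d : ℝ) else 0 := by
  have : NeZero d := ⟨by omega⟩
  have hXY : X.val * Y.val < d :=
    (Nat.mul_le_mul (Nat.le_of_lt_succ X.isLt) (Nat.le_of_lt_succ Y.isLt)).trans_lt (by omega)
  simp only [kBox, a.isLt, b.isLt, true_and]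
  refine if_congr ?_ rfl rfl
  rw [finRotate_pow_apply, ← sub_eq_iff_eq_add', Fin.ext_iff, Fin.val_sub, Fin.val_natCast,
    Nat.mod_eq_of_lt hXY, add_comm]

end Permutations

namespace NoSignalling

open Equiv

variable {d : ℕ}

def permBox (π : Fin 2 → Fin 2 → Perm (Fin d)) (β : Fin 2 → Fin d → ℝ) : Box d :=
  fun X Y a b => if b = π X Y a then β X a else 0

theorem exists_eq_permBox {p : Box d} (hp : p ∈ (NSPolytope d).extremePoints ℝ)
    (hfullA : ∀ X Y a, ∑ b, p X Y a b ≠ 0) (hfullB : ∀ X Y b, ∑ a, p X Y a b ≠ 0) :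
    ∃ π β, p = permBox π β ∧ ∀ X a, β X a ≠ 0 := by
  have hrow : ∀ X Y a, ∃ b, p X Y a b ≠ 0 := fun X Y a => by
    simpa using exists_ne_zero_of_sum_ne_zero (hfullA X Y a)
  have hcol : ∀ X Y b, ∃ a, p X Y a b ≠ 0 := fun X Y b => by
    simpa using exists_ne_zero_of_sum_ne_zero (hfullB X Y b)
  have hblock : ∀ X Y, #{x : Fin d × Fin d | p X Y x.1 x.2 ≠ 0} ≤ d := by
    have htotal := sum_card_support_le_of_mem_extremePoints hp
    have hge : ∀ X Y, d ≤ #{x : Fin d × Fin d | p X Y x.1 x.2 ≠ 0} := fun X Y => by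
      simpa using card_le_card_support (p X Y) (hrow X Y)
    simp only [Fin.sum_univ_two] at htotal
    simp only [Fin.forall_fin_two]
    have := hge 0 0; have := hge 0 1; have := hge 1 0; have := hge 1 1
    omega
  choose π hπ using fun X Y => exists_perm_ne_zero_iff_of_card_support_le (p X Y) (hrow X Y)
    (hcol X Y) (by simpa using hblock X Y)
  obtain ⟨-, -, hA, -⟩ := hp.1
  refine ⟨π, fun X a => ∑ b, p X 0 a b, ?_, fun X a => hfullA X 0 a⟩
  ext X Y a b
  by_cases hb : b = π X Y a
  · rw [permBox, if_pos hb, ← hA X a Y 0, sum_eq_single b (fun b' _ hb' => ?_) (by simp)]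
    exact not_not.1 (mt (hπ X Y a b').1 (hb ▸ hb'))
  · rw [permBox, if_neg hb]
    exact not_not.1 (mt (hπ X Y a b).1 hb)

theorem constraintMap_permBox (π : Fin 2 → Fin 2 → Perm (Fin d))
    (β : Fin 2 → Fin d → ℝ) :
    constraintMap d (permBox π β) =
      (0, fun Y b => β 0 ((π 0 Y)⁻¹ b) - β 1 ((π 1 Y)⁻¹ b), ∑ a, β 0 a) := by
  have hrow : ∀ X Y a, ∑ b, permBox π β X Y a b = β X a := by simp [permBox]
  have hcol : ∀ X Y b, ∑ a, permBox π β X Y a b = β X ((π X Y)⁻¹ b) := by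
    simp [permBox, ← Equiv.symm_apply_eq]
  ext <;> simp [constraintMap, hrow, hcol]

theorem forall_apply_inv_eq_iff (π : Fin 2 → Fin 2 → Perm (Fin d))
    (β : Fin 2 → Fin d → ℝ) (Y : Fin 2) :
    (∀ b, β 0 ((π 0 Y)⁻¹ b) = β 1 ((π 1 Y)⁻¹ b)) ↔
      ∀ a, β 1 a = β 0 (bobShift π Y a) := by
  constructor
  · intro h a
    simpa [bobShift] using (h (π 1 Y a)).symm
  · intro h b
    simp [h, bobShift]

theorem eq_zero_of_holonomy_invariant {π : Fin 2 → Fin 2 → Perm (Fin d)}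
    {α : Fin 2 → Fin d → ℝ} (hp : permBox π α ∈ (NSPolytope d).extremePoints ℝ)
    (hα : ∀ X a, α X a ≠ 0) (f : Fin d → ℝ) (hf : ∀ a, f (holonomy π a) = f a)
    (hsum : ∑ a, f a = 0) : f = 0 := by
  set β : Fin 2 → Fin d → ℝ := ![f, fun a => f (bobShift π 0 a)]
  have hbob : ∀ Y a, β 1 a = β 0 (bobShift π Y a) := by
    intro Y a
    fin_cases Y
    · rfl
    · simpa [β, holonomy] using (hf (bobShift π 0 a)).symm
  have hq : permBox π β = 0 := by
    refine eq_zero_of_supported_of_mem_extremePoints hp ?_ fun X Y a b h0 => ?_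
    · rw [constraintMap_permBox]
      ext Y b
      · rfl
      · exact sub_eq_zero.2 ((forall_apply_inv_eq_iff π β Y).2 (hbob Y) b)
      · simpa [β] using hsum
    · simp only [permBox] at h0 ⊢
      split_ifs at h0 ⊢ with hb
      · exact absurd h0 (hα X a)
      · rfl
  funext a
  simpa [permBox, β] using congr($hq 0 0 a (π 0 0 a))

theorem permBox_weight_eq_one_div [NeZero d] {π : Fin 2 → Fin 2 → Perm (Fin d)}
    {α : Fin 2 → Fin d → ℝ} (hp : permBox π α ∈ NSPolytope d)
    (hinv : ∀ f : Fin d → ℝ, (∀ a, f (holonomy π a) = f a) → ∑ a, f a = 0 → f = 0)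
    (X : Fin 2) (a : Fin d) : α X a = 1 / d := by
  obtain ⟨-, hmap⟩ := mem_NSPolytope_iff.1 hp
  simp only [constraintMap_permBox, Prod.mk.injEq, funext_iff, Pi.zero_apply, sub_eq_zero]
    at hmap
  obtain ⟨-, hB, hnorm⟩ := hmap
  have hbob := fun Y => (forall_apply_inv_eq_iff π α Y).1 (hB Y)
  have hα0 : ∀ a, α 0 a = 1 / d := by
    have h := hinv (fun a => α 0 a - 1 / d) (fun a => ?_) (by simp [sum_sub_distrib, hnorm])
    · exact fun a => sub_eq_zero.1 (congrFun h a)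
    · obtain ⟨c, rfl⟩ := (bobShift π 0).surjective a
      simp [holonomy, ← hbob]
  fin_cases X
  · exact hα0 a
  · simpa [hα0] using hbob 0 a

end NoSignalling

/-- every vertex (extreme point) of the two-input `d`-output
no-signalling polytope whose single-party marginals are all nonzero
(full-output vertex) is, up to local relabellings of inputs and of outputs
(the latter possibly conditioned on the input), either a local deterministic
box or the `k`-box for some `2 ≤ k ≤ d`. -/
theorem full_output_vertices_classification (d : ℕ)
    (p : Fin 2 → Fin 2 → Fin d → Fin d → ℝ)
    (hext : p ∈ (NSPolytope d).extremePoints ℝ)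
    (hfullA : ∀ X Y a, ∑ b, p X Y a b ≠ 0)
    (hfullB : ∀ X Y b, ∑ a, p X Y a b ≠ 0) :
    (∃ f g : Fin 2 → Fin d,
        ∀ X Y a b, p X Y a b = if a = f X ∧ b = g Y then 1 else 0) ∨
    (∃ k, 2 ≤ k ∧ k ≤ d ∧
      ∃ (σA σB : Fin 2 ≃ Fin 2) (πA πB : Fin 2 → (Fin d ≃ Fin d)),
        ∀ X Y a b,
          p (σA X) (σB Y) (πA X a) (πB Y b) = kBox d k X Y a b) := by
  rcases lt_or_ge d 2 with hd | hd
  · left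
    interval_cases d
    · simpa using hext.1.2.1 0 0
    · exact ⟨0, 0, fun X Y a b => by
        simpa [Subsingleton.elim a 0, Subsingleton.elim b 0] using hext.1.2.1 X Y⟩
  right
  have : NeZero d := ⟨by omega⟩
  obtain ⟨π, α, rfl, hα⟩ := NoSignalling.exists_eq_permBox hext hfullA hfullB
  have hinv := NoSignalling.eq_zero_of_holonomy_invariant hext hα
  obtain ⟨c, hc⟩ := isConj_iff.1 (isConj_finRotate_of_forall_invariant hd _ hinv)
  have hθ : holonomy π * c⁻¹ = c⁻¹ * finRotate d := by rw [← hc]; group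
  refine ⟨d, hd, le_rfl, Equiv.refl _, Equiv.refl _, ![c⁻¹, (bobShift π 0)⁻¹ * c⁻¹],
    ![π 0 0 * c⁻¹, π 0 1 * c⁻¹], fun X Y a b => ?_⟩
  rw [kBox_self_apply hd, Equiv.refl_apply, Equiv.refl_apply, NoSignalling.permBox,
    NoSignalling.permBox_weight_eq_one_div hext.1 hinv, apply_relabel_eq π hθ]
  simp only [EmbeddingLike.apply_eq_iff_eq]
end

section
/- Lower bound on communication (Lemma 1, shared-randomness case): Any exact simulation of n d-boxes using one-way communication from Alice to Bob plus shared randomness requires at least n bits of communication. Formally, if Bob's joint output B = B(Y, C, r) depends on his inputs Y ∈ {0,1}^n, a message C, and shared randomness r, and the protocol reproduces the product of n d-boxes, then the message C must take at least 2^n distinct values as Alice's input X ranges over {0,1}^n. -/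
/-- The `d`-box: `p(ab|XY) = 1/d` if `(b − a) mod d = X·Y`, else `0`. -/
noncomputable def dBox (d : ℕ) : Fin 2 → Fin 2 → Fin d → Fin d → ℝ :=
  fun X Y a b => if (b.val + (d - a.val)) % d = X.val * Y.val then 1 / d else 0

lemma modval_aux (d a b : ℕ) (ha : a < d) (hb : b < d) :
    (b + (d - a)) % d = if a ≤ b then b - a else b + d - a := by
  by_cases h : a ≤ b
  · rw [if_pos h]
    have he : b + (d - a) = (b - a) + d := by omega
    rw [he, Nat.add_mod_right]
    exact Nat.mod_eq_of_lt (by omega)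
  · rw [if_neg h]
    have he : b + (d - a) = b + d - a := by omega
    rw [he]
    exact Nat.mod_eq_of_lt (by omega)

/-- Lemma 1, shared-randomness case: any exact simulation of
`n` `d`-boxes by one-way communication from Alice to Bob plus shared
randomness requires at least `n` bits of communication, i.e. the message must
take at least `2^n` distinct values.  Here `r` is the shared randomness with
distribution `μ`, `enc X r` is Alice's message, `Aout X r` is Alice's joint
output, and `Bout Y C r` is Bob's joint output. -/
theorem simulation_needs_n_bits
    (n d : ℕ) (hn : 1 ≤ n) (hd : 2 ≤ d)
    (R : Type*) [Fintype R] (μ : R → ℝ)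
    (hμ : ∀ r, 0 ≤ μ r) (hμ1 : ∑ r, μ r = 1)
    (M : Type*) [Fintype M]
    (enc : (Fin n → Fin 2) → R → M)
    (Aout : (Fin n → Fin 2) → R → (Fin n → Fin d))
    (Bout : (Fin n → Fin 2) → M → R → (Fin n → Fin d))
    (hsim : ∀ (X Y : Fin n → Fin 2) (a b : Fin n → Fin d),
      (∑ r, μ r * (if Aout X r = a ∧ Bout Y (enc X r) r = b then 1 else 0))
        = ∏ i, dBox d (X i) (Y i) (a i) (b i)) :
    2 ^ n ≤ Fintype.card M := by
  obtain ⟨r, hr⟩ : ∃ r, 0 < μ r := by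
    by_contra h
    push_neg at h
    have h0 : ∀ r, μ r = 0 := fun r => le_antisymm (h r) (hμ r)
    simp [h0] at hμ1
  have key : ∀ (X Y : Fin n → Fin 2) (i : Fin n),
      ((Bout Y (enc X r) r i).val + (d - (Aout X r i).val)) % d
        = (X i).val * (Y i).val := by
    intro X Y i
    have h := hsim X Y (Aout X r) (Bout Y (enc X r) r)
    have hpos : 0 < ∑ r', μ r' * (if Aout X r' = Aout X r ∧
        Bout Y (enc X r') r' = Bout Y (enc X r) r then 1 else 0) := by
      apply Finset.sum_pos'
      · intro j _
        have : (0:ℝ) ≤ (if Aout X j = Aout X r ∧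
            Bout Y (enc X j) j = Bout Y (enc X r) r then (1:ℝ) else 0) := by
          split <;> norm_num
        exact mul_nonneg (hμ j) this
      · exact ⟨r, Finset.mem_univ r, by simp [hr]⟩
    rw [h] at hpos
    have hne := Finset.prod_ne_zero_iff.mp (ne_of_gt hpos) i (Finset.mem_univ i)
    unfold dBox at hne
    by_contra hc
    simp [hc] at hne
  have hinj : Function.Injective (fun X => enc X r) := by
    intro X X' hXX'
    simp only at hXX'
    funext i
    have hd0 : 0 < d := by omega
    have ha1 : (Aout X r i).val < d := (Aout X r i).isLt
    have ha2 : (Aout X' r i).val < d := (Aout X' r i).isLt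
    have hb1 : (Bout (fun _ => 0) (enc X' r) r i).val < d :=
      (Bout (fun _ => 0) (enc X' r) r i).isLt
    have hb2 : (Bout (fun _ => 1) (enc X' r) r i).val < d :=
      (Bout (fun _ => 1) (enc X' r) r i).isLt
    have h1 := key X (fun _ => 0) i
    have h2 := key X' (fun _ => 0) i
    have h3 := key X (fun _ => 1) i
    have h4 := key X' (fun _ => 1) i
    rw [hXX'] at h1 h3
    simp only [Fin.val_zero, mul_zero, Fin.val_one, mul_one] at h1 h2 h3 h4
    rw [modval_aux d _ _ ha1 hb1] at h1
    rw [modval_aux d _ _ ha2 hb1] at h2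
    rw [modval_aux d _ _ ha1 hb2] at h3
    rw [modval_aux d _ _ ha2 hb2] at h4
    have hx1 : (X i).val < 2 := (X i).isLt
    have hx2 : (X' i).val < 2 := (X' i).isLt
    have : (X i).val = (X' i).val := by
      split_ifs at h1 h2 h3 h4 <;> omega
    exact Fin.ext this
  calc 2 ^ n = Fintype.card (Fin n → Fin 2) := by simp
    _ ≤ Fintype.card M := Fintype.card_le_of_injective _ hinj
end
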